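/- arXiv:2012.15181 — 2 statements merged into one kernel-verified Lean document; each statement's English description precedes it below -/
import Mathlib

section
/- Let k be a field of characteristic p > 0 and let ∂ be the k-derivation on k[x] with ∂(x) = x². Then ∂^p = 0, i.e., the p-th iterate of ∂ annihilates every polynomial. -/
open Polynomial Finset

lemma aux_iter_nsmul {k : Type} [Field k] (d : Derivation k (Polynomial k) (Polynomial k))
    (n : ℕ) (c : ℕ) (f : Polynomial k) : (⇑d)^[n] (c • f) = c • (⇑d)^[n] f := by
  induction n generalizing f with
  | zero => simp
  | succ n ih => rw [Function.iterate_succ_apply, map_nsmul, ih, ← Function.iterate_succ_apply]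

lemma aux_iter_smul {k : Type} [Field k] (d : Derivation k (Polynomial k) (Polynomial k))
    (n : ℕ) (c : k) (f : Polynomial k) : (⇑d)^[n] (c • f) = c • (⇑d)^[n] f := by
  induction n generalizing f with
  | zero => simp
  | succ n ih => simp [Function.iterate_succ_apply, Derivation.map_smul, ih]

lemma aux_iter_add {k : Type} [Field k] (d : Derivation k (Polynomial k) (Polynomial k))
    (n : ℕ) (f g : Polynomial k) : (⇑d)^[n] (f + g) = (⇑d)^[n] f + (⇑d)^[n] g := by
  induction n generalizing f g with
  | zero => simp
  | succ n ih => simp [Function.iterate_succ_apply, map_add, ih]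

lemma aux_dX {k : Type} [Field k] (d : Derivation k (Polynomial k) (Polynomial k))
    (hd : d Polynomial.X = Polynomial.X ^ 2) (m : ℕ) :
    d (X ^ m : Polynomial k) = m • (X : Polynomial k) ^ (m + 1) := by
  cases m with
  | zero => simp
  | succ n =>
      rw [Derivation.leibniz_pow, hd, smul_eq_mul, ← pow_add]
      norm_num

lemma aux_iter_pow {k : Type} [Field k] (d : Derivation k (Polynomial k) (Polynomial k))
    (hd : d Polynomial.X = Polynomial.X ^ 2) (n m : ℕ) :
    (⇑d)^[n] (X ^ m : Polynomial k)
      = (∏ i ∈ Finset.range n, (m + i)) • (X : Polynomial k) ^ (m + n) := by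
  induction n generalizing m with
  | zero => simp
  | succ n ih =>
      rw [Function.iterate_succ_apply, aux_dX d hd, aux_iter_nsmul, ih, smul_smul,
        Finset.prod_range_succ', show m + 1 + n = m + (n + 1) from by omega]
      congr 1
      rw [mul_comm]
      congr 1
      exact Finset.prod_congr rfl fun i _ => by omega

/-- Let `k` be a field of characteristic `p > 0` and let `∂` be the `k`-derivation on
`k[x]` with `∂(x) = x²`.  Then `∂^p = 0`, i.e. the `p`-th iterate of `∂` annihilates
every polynomial. -/
theorem stmt1 (k : Type) [Field k] (p : ℕ) (hp : 0 < p) [CharP k p]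
    (d : Derivation k (Polynomial k) (Polynomial k))
    (hd : d Polynomial.X = Polynomial.X ^ 2) :
    ∀ f : Polynomial k, (⇑d)^[p] f = 0 := by
  have key : ∀ m : ℕ, (⇑d)^[p] (X ^ m : Polynomial k) = 0 := by
    intro m
    rw [aux_iter_pow d hd]
    have hdvd : p ∣ ∏ i ∈ Finset.range p, (m + i) := by
      rcases Nat.eq_zero_or_pos (m % p) with h | h
      · exact dvd_trans (by simpa using Nat.dvd_of_mod_eq_zero h)
          (Finset.dvd_prod_of_mem (fun i => m + i) (Finset.mem_range.mpr hp))
      · have hlt : p - m % p < p := by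
          have := Nat.mod_lt m hp
          omega
        have hdvd' : p ∣ m + (p - m % p) := by
          have h1 : p ∣ m - m % p := Nat.dvd_sub_mod m
          have h2 : m % p ≤ m := Nat.mod_le m p
          have h3 : m % p ≤ p := le_of_lt (Nat.mod_lt m hp)
          have heq : m + (p - m % p) = (m - m % p) + p := by omega
          rw [heq]
          exact dvd_add h1 dvd_rfl
        exact hdvd'.trans (Finset.dvd_prod_of_mem (fun i => m + i) (Finset.mem_range.mpr hlt))
    have hcast : ((∏ i ∈ Finset.range p, (m + i) : ℕ) : Polynomial k) = 0 :=
      (CharP.cast_eq_zero_iff (Polynomial k) p _).mpr hdvd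
    rw [nsmul_eq_mul, hcast, zero_mul]
  intro f
  induction f using Polynomial.induction_on' with
  | add f g hf hg => rw [aux_iter_add, hf, hg, add_zero]
  | monomial n a =>
      rw [← Polynomial.smul_X_eq_monomial, aux_iter_smul, key, smul_zero]
end

section
/- Let k be a field of characteristic p > 0 and let ∂ be the k-derivation of the polynomial ring k[x₁, …, xₙ] determined by ∂(xᵢ) = xᵢ² for all i. Then ∂^p = 0. -/
open Finset

lemma iter_leibniz {R A : Type*} [CommRing R] [CommRing A] [Algebra R A]
    (d : Derivation R A A) (n : ℕ) (p q : A) :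
    (⇑d)^[n] (p * q) =
      ∑ k ∈ range n.succ, (n.choose k • ((⇑d)^[n - k] p * (⇑d)^[k] q)) := by
  induction n with
  | zero => simp [Finset.range]
  | succ n IH =>
    have hmul : ∀ a b : A, d (a * b) = d a * b + a * d b := by
      intro a b
      rw [d.leibniz]; simp [smul_eq_mul]; ring
    calc
      (⇑d)^[n + 1] (p * q) =
          d (∑ k ∈ range n.succ,
              n.choose k • ((⇑d)^[n - k] p * (⇑d)^[k] q)) := by
        rw [Function.iterate_succ_apply', IH]
      _ = (∑ k ∈ range n.succ,
            n.choose k • ((⇑d)^[n - k + 1] p * (⇑d)^[k] q)) +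
          ∑ k ∈ range n.succ,
            n.choose k • ((⇑d)^[n - k] p * (⇑d)^[k + 1] q) := by
        rw [map_sum]
        simp_rw [d.map_smul_of_tower, hmul, Function.iterate_succ_apply',
          smul_add, sum_add_distrib]
      _ = (∑ k ∈ range n.succ,
                n.choose k.succ • ((⇑d)^[n - k] p * (⇑d)^[k + 1] q)) +
              1 • ((⇑d)^[n + 1] p * (⇑d)^[0] q) +
            ∑ k ∈ range n.succ, n.choose k • ((⇑d)^[n - k] p * (⇑d)^[k + 1] q) :=
        ?_
      _ = ((∑ k ∈ range n.succ, n.choose k • ((⇑d)^[n - k] p * (⇑d)^[k + 1] q)) +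
              ∑ k ∈ range n.succ,
                n.choose k.succ • ((⇑d)^[n - k] p * (⇑d)^[k + 1] q)) +
            1 • ((⇑d)^[n + 1] p * (⇑d)^[0] q) := by
        rw [add_comm, add_assoc]
      _ = (∑ i ∈ range n.succ,
              (n + 1).choose (i + 1) • ((⇑d)^[n + 1 - (i + 1)] p * (⇑d)^[i + 1] q)) +
            1 • ((⇑d)^[n + 1] p * (⇑d)^[0] q) := by
        simp_rw [Nat.choose_succ_succ, Nat.succ_sub_succ, add_smul, sum_add_distrib]
      _ = ∑ k ∈ range n.succ.succ,
            n.succ.choose k • ((⇑d)^[n.succ - k] p * (⇑d)^[k] q) := by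
        rw [sum_range_succ' _ n.succ, Nat.choose_zero_right, tsub_zero]
    congr
    refine (sum_range_succ' _ _).trans (congr_arg₂ (· + ·) ?_ ?_)
    · rw [sum_range_succ, Nat.choose_succ_self, zero_smul, add_zero]
      refine sum_congr rfl fun k hk => ?_
      rw [mem_range] at hk
      congr
      omega
    · rw [Nat.choose_zero_right, tsub_zero]

/-- Let `k` be a field of characteristic `p > 0` and let `∂` be the `k`-derivation of the
polynomial ring `k[x₁, …, xₙ]` determined by `∂(xᵢ) = xᵢ²` for all `i`.  Then `∂^p = 0`. -/
theorem stmt3 (k : Type) [Field k] (p : ℕ) (hp : 0 < p) [CharP k p] (n : ℕ)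
    (d : Derivation k (MvPolynomial (Fin n) k) (MvPolynomial (Fin n) k))
    (hd : ∀ i : Fin n, d (MvPolynomial.X i) = MvPolynomial.X i ^ 2) :
    ∀ f : MvPolynomial (Fin n) k, (⇑d)^[p] f = 0 := by
  have hfix : ∀ m : ℕ, (⇑d)^[m] (0 : MvPolynomial (Fin n) k) = 0 :=
    fun m => Function.iterate_fixed (d.map_zero) m
  have charPoly : CharP (MvPolynomial (Fin n) k) p := inferInstance
  -- d^[m] (X i) = m! • X i ^ (m+1)
  have hX : ∀ (i : Fin n) (m : ℕ),
      (⇑d)^[m] (MvPolynomial.X i) = m.factorial • MvPolynomial.X i ^ (m + 1) := by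
    intro i m
    induction m with
    | zero => simp
    | succ m IH =>
      rw [Function.iterate_succ_apply', IH, d.map_smul_of_tower, Derivation.leibniz_pow,
        hd i, Nat.add_sub_cancel, smul_smul, smul_eq_mul, ← pow_add,
        Nat.factorial_succ, Nat.mul_comm]
  have hXp : ∀ i : Fin n, (⇑d)^[p] (MvPolynomial.X i) = 0 := by
    intro i
    rw [hX i p]
    have : (p.factorial : MvPolynomial (Fin n) k) = 0 := by
      rw [CharP.cast_eq_zero_iff _ p]
      exact Nat.dvd_factorial hp le_rfl
    rw [nsmul_eq_mul, this, zero_mul]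
  intro f
  induction f using MvPolynomial.induction_on with
  | C a =>
      obtain ⟨q, rfl⟩ := Nat.exists_eq_add_of_lt hp
      rw [zero_add, Function.iterate_succ_apply]
      have : d (MvPolynomial.C a) = 0 := by
        have := d.map_algebraMap a
        rwa [MvPolynomial.algebraMap_eq] at this
      rw [this, hfix]
  | add f g hf hg =>
      have : ∀ m (a b : MvPolynomial (Fin n) k),
          (⇑d)^[m] (a + b) = (⇑d)^[m] a + (⇑d)^[m] b := by
        intro m
        induction m with
        | zero => simp
        | succ m IH =>
            intro a b
            rw [Function.iterate_succ_apply, d.map_add, IH,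
              ← Function.iterate_succ_apply, ← Function.iterate_succ_apply]
      rw [this, hf, hg, add_zero]
  | mul_X f i hf =>
      rw [iter_leibniz]
      refine Finset.sum_eq_zero fun j hj => ?_
      rcases Nat.lt_or_ge j p with h | h
      · rcases Nat.eq_zero_or_pos j with rfl | hj0
        · simp [hf]
        · -- 0 < j < p : choose p j ≡ 0 mod p
          have hdvd : p ∣ p.choose j :=
            Nat.Prime.dvd_choose_self
              ((CharP.char_is_prime_or_zero k p).resolve_right hp.ne') hj0.ne' h
          obtain ⟨c, hc⟩ := hdvd
          rw [hc, mul_smul]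
          have hpz : ∀ x : MvPolynomial (Fin n) k, p • x = 0 := by
            intro x
            rw [nsmul_eq_mul, CharP.cast_eq_zero (MvPolynomial (Fin n) k) p, zero_mul]
          rw [hpz]
      · -- j = p, since j < p+1
        have : j = p := by rw [Finset.mem_range] at hj; omega
        subst this
        rw [hXp, mul_zero, smul_zero]
end
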